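/- arXiv:2302.07339 — 2 statements merged into one kernel-verified Lean document; each statement's English description precedes it below -/
import Mathlib

section
/- Let $(c_m)_{m\in\mathbb{N}^r}$ be a family of elements of a ring filtered by a dimension function $\dim$ satisfying $\dim(x+y)\le\max(\dim x,\dim y)$ and $\dim(x\cdot L^{-k}) = \dim(x) - k$. Assume there exists $a>0$ with $\dim(c_m)\le -a|m|$ for all $m$, where $|m|=\sum_i m_i$. Then for every non-empty subset $A\subseteq\{1,\dots,r\}$ and every non-negative integer $b$, and every $m$ with all coordinates at least $b$, one has $\dim\big(\sum_{m'\le m-b} c_{m'} L^{|m'_A|-|m_A|}\big) \le -\tfrac{\min(1,a)}{2}\min_{\alpha\in A}(m_\alpha) - \tfrac{b}{2}\min(1,\,2|A|-a)$, where $m_A$ denotes the restriction of $m$ to $A$ and $b=(b,\dots,b)$. -/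
/-!
Each summand `c m' L^{-K}` with `K = |m_A| - |m'_A|` has dimension at most
`-a|m'| - K ≤ ∑_{α ∈ A} ((1 - a) m'_α - m_α)`. Since `m'_α + b ≤ m_α`, each coordinate contributes
at most `-(t/2)(m_α - b) - b` with `t = min 1 a` (for `a ≤ 1` bound `m'_α` by `m_α - b`, for
`a ≥ 1` drop it). Dropping all but one of these nonpositive `-(t/2)(m_α - b)` terms leaves
`-(t/2) min_A m - b(|A| - t/2)`, and `2|A| - t ≥ min 1 (2|A| - a)` because `|A| ≥ 1`.
-/

open Finset

lemma one_sub_mul_sub_le {a b x y : ℝ} (ha : 0 ≤ a) (hx : 0 ≤ x) (hxy : x + b ≤ y) :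
    (1 - a) * x - y ≤ -(min 1 a / 2) * (y - b) - b := by
  rcases le_total a 1 with h | h
  · rw [min_eq_right h]
    nlinarith [mul_nonneg (sub_nonneg.2 h) (by linarith : 0 ≤ y - b - x),
      mul_nonneg ha (by linarith : 0 ≤ y - b)]
  · rw [min_eq_left h]
    nlinarith [mul_nonneg (sub_nonneg.2 h) hx]

lemma sum_one_sub_mul_sub_le {ι : Type*} {A : Finset ι} (hA : A.Nonempty) {a b : ℝ} {x y : ι → ℝ}
    (ha : 0 ≤ a) (hb : 0 ≤ b) (hx : ∀ i ∈ A, 0 ≤ x i) (hxy : ∀ i ∈ A, x i + b ≤ y i) :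
    ∑ i ∈ A, ((1 - a) * x i - y i) ≤
      -(min 1 a / 2) * A.inf' hA y - b / 2 * min 1 (2 * (#A : ℝ) - a) := by
  set t := min 1 a
  have ht : 0 ≤ t := le_min zero_le_one ha
  have hmin : min 1 (2 * (#A : ℝ) - a) ≤ 2 * #A - t := by
    have hcard : (1 : ℝ) ≤ #A := by exact_mod_cast hA.card_pos
    rcases le_total a 1 with h | h
    · simp only [t, min_eq_right h, min_le_right]
    · simp only [t, min_eq_left h]
      exact (min_le_left _ _).trans (by linarith)
  have hinf : A.inf' hA y - b ≤ ∑ i ∈ A, (y i - b) := by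
    obtain ⟨i, hi⟩ := hA
    calc A.inf' _ y - b ≤ y i - b := by gcongr; exact inf'_le y hi
      _ ≤ ∑ i ∈ A, (y i - b) :=
        single_le_sum (f := fun j => y j - b) (fun j hj => by linarith [hx j hj, hxy j hj]) hi
  calc ∑ i ∈ A, ((1 - a) * x i - y i)
      ≤ ∑ i ∈ A, (-(t / 2) * (y i - b) - b) :=
        sum_le_sum fun i hi => one_sub_mul_sub_le ha (hx i hi) (hxy i hi)
    _ = -(t / 2) * ∑ i ∈ A, (y i - b) - #A * b := by
        rw [sum_sub_distrib, ← mul_sum, sum_const, nsmul_eq_mul]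
    _ ≤ -(t / 2) * (A.inf' hA y - b) - #A * b := by nlinarith
    _ ≤ -(t / 2) * A.inf' hA y - b / 2 * min 1 (2 * (#A : ℝ) - a) := by nlinarith

lemma neg_mul_sum_sub_sum_tsub_le {ι : Type*} [Fintype ι] (A : Finset ι) {a : ℝ} (ha : 0 ≤ a)
    {x y : ι → ℕ} (hxy : x ≤ y) :
    -(a * ∑ i, (x i : ℝ)) - ((∑ i ∈ A, (y i - x i) : ℕ) : ℝ) ≤
      ∑ i ∈ A, ((1 - a) * x i - y i) := by
  have hsub : ∑ i ∈ A, (x i : ℝ) ≤ ∑ i, (x i : ℝ) :=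
    sum_le_sum_of_subset_of_nonneg (subset_univ A) fun i _ _ => by positivity
  have hcast : ((∑ i ∈ A, (y i - x i) : ℕ) : ℝ) = ∑ i ∈ A, ((y i : ℝ) - x i) := by
    push_cast [Nat.cast_sub (hxy _)]
    rfl
  have hsplit : ∑ i ∈ A, ((1 - a) * x i - y i) =
      -(a * ∑ i ∈ A, (x i : ℝ)) - ∑ i ∈ A, ((y i : ℝ) - x i) := by
    simp only [sub_mul, one_mul, sum_sub_distrib, mul_sum]
    ring
  rw [hcast, hsplit]
  nlinarith

/-- Lemma 2.21: dimension bound for weighted partial sums in a ring with a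
dimension function `dim` (values in `ℤ ∪ {±∞}`, modelled by `EReal`), where
`Linv` plays the role of `𝕃⁻¹` (so `dim (x * Linv ^ k) = dim x - k`). -/
theorem dim_sum_le_of_dim_le
    {M : Type*} [CommRing M] (dim : M → EReal) (Linv : M)
    (hadd : ∀ x y : M, dim (x + y) ≤ max (dim x) (dim y))
    (hmul : ∀ (x : M) (k : ℕ), dim (x * Linv ^ k) = dim x - k)
    {r : ℕ} (c : (Fin r → ℕ) → M) (a : ℝ) (ha : 0 < a)
    (hc : ∀ m : Fin r → ℕ, dim (c m) ≤ ((-(a * ∑ i, (m i : ℝ))) : ℝ))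
    (A : Finset (Fin r)) (hA : A.Nonempty) (b : ℕ)
    (m : Fin r → ℕ) (hm : ∀ i, b ≤ m i) :
    dim (∑ m' ∈ Fintype.piFinset (fun i => Finset.Iic (m i - b)),
        c m' * Linv ^ (∑ α ∈ A, (m α - m' α))) ≤
      (((-(min 1 a) / 2) * (A.inf' hA fun α => (m α : ℝ))
        - (b : ℝ) / 2 * min 1 (2 * (A.card : ℝ) - a) : ℝ) : EReal) := by
  refine sum_induction_nonempty _ (fun x => dim x ≤ _)
    (fun x y hx hy => (hadd x y).trans (max_le hx hy)) ⟨0, by simp⟩ fun m' hm' => ?_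
  have hle : ∀ i, m' i + b ≤ m i := fun i =>
    (Nat.le_sub_iff_add_le (hm i)).1 (mem_Iic.1 (Fintype.mem_piFinset.1 hm' i))
  have hreal : -(a * ∑ i, (m' i : ℝ)) - ((∑ α ∈ A, (m α - m' α) : ℕ) : ℝ) ≤
      -(min 1 a) / 2 * A.inf' hA (fun α => (m α : ℝ)) - b / 2 * min 1 (2 * (#A : ℝ) - a) := by
    refine (neg_mul_sum_sub_sum_tsub_le A ha.le fun i => le_of_add_le_left (hle i)).trans ?_
    rw [neg_div]
    exact sum_one_sub_mul_sub_le hA ha.le (Nat.cast_nonneg b) (fun i _ => Nat.cast_nonneg _)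
      fun i _ => by exact_mod_cast hle i
  rw [hmul]
  exact (EReal.sub_le_sub (hc m') le_rfl).trans (EReal.coe_le_coe_iff.2 hreal)
end

section
/- Let $B\subseteq\{0,1\}^S$ for a finite set $S$, and let $A(B)\subseteq\mathbb{N}^S$ be the set of tuples $n$ such that there is no $n'\in B$ with $n\ge n'$. Define $\mu_B:\mathbb{N}^S\to\mathbb{Z}$ by the inversion relation $\mathbf{1}_{A(B)}(n) = \sum_{0\le n'\le n}\mu_B(n')$ for all $n\in\mathbb{N}^S$. Then $\mu_B$ is supported on $\{0,1\}^S$, i.e. $\mu_B(n)=0$ whenever some coordinate of $n$ is at least $2$. -/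
open scoped Classical

/-- The local Möbius function of a pattern `B ⊆ {0,1}^S`, defined by the
inversion relation `𝟙_{A(B)}(n) = ∑_{n' ≤ n} μ_B(n')` where
`A(B) = {n : no n' ∈ B with n' ≤ n}`, is supported on `{0,1}^S`. -/
theorem moebius_supported_on_cube {S : Type*} [Fintype S] [DecidableEq S]
    (B : Finset (S → ℕ)) (hB : ∀ b ∈ B, ∀ i, b i ≤ 1)
    (μ : (S → ℕ) → ℤ)
    (hμ : ∀ n : S → ℕ,
        ∑ n' ∈ Fintype.piFinset (fun i => Finset.Iic (n i)), μ n' =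
          if ∀ b ∈ B, ¬ b ≤ n then 1 else 0)
    (n : S → ℕ) (i : S) (hi : 2 ≤ n i) : μ n = 0 := by
  suffices key : ∀ N : ℕ, ∀ n : S → ℕ, (∑ j, n j) = N → ∀ i, 2 ≤ n i → μ n = 0 by
    exact key _ n rfl i hi
  clear hi i n
  intro N
  induction N using Nat.strong_induction_on with
  | _ N IH =>
    intro n hN i hi
    set m : S → ℕ := Function.update n i (n i - 1) with hm
    have hmi : m i = n i - 1 := Function.update_self _ _ _
    have hmj : ∀ j ≠ i, m j = n j := fun j hj => Function.update_of_ne hj _ _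
    have hmle : ∀ j, m j ≤ n j := by
      intro j
      by_cases h : j = i
      · subst h; rw [hmi]; omega
      · rw [hmj j h]
    have hsub : Fintype.piFinset (fun j => Finset.Iic (m j)) ⊆
        Fintype.piFinset (fun j => Finset.Iic (n j)) := by
      intro x hx
      simp only [Fintype.mem_piFinset, Finset.mem_Iic] at hx ⊢
      exact fun j => (hx j).trans (hmle j)
    have hiff : (∀ b ∈ B, ¬ b ≤ n) ↔ (∀ b ∈ B, ¬ b ≤ m) := by
      constructor
      · intro h b hb hbm
        exact h b hb (fun j => (hbm j).trans (hmle j))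
      · intro h b hb hbn
        refine h b hb (fun j => ?_)
        by_cases hj : j = i
        · have h1 := hB b hb i
          rw [hj, hmi]
          exact h1.trans (Nat.le_sub_of_add_le hi)
        · rw [hmj j hj]; exact hbn j
    have hsd : ∑ n' ∈ (Fintype.piFinset (fun j => Finset.Iic (n j)) \
        Fintype.piFinset (fun j => Finset.Iic (m j))), μ n' = 0 := by
      rw [Finset.sum_sdiff_eq_sub hsub, hμ, hμ]
      by_cases h : ∀ b ∈ B, ¬ b ≤ n
      · rw [if_pos h, if_pos (hiff.mp h)]; ring
      · rw [if_neg h, if_neg (fun h' => h (hiff.mpr h'))]; ring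
    have hmemsd : ∀ n' : S → ℕ, n' ∈ (Fintype.piFinset (fun j => Finset.Iic (n j)) \
        Fintype.piFinset (fun j => Finset.Iic (m j))) ↔ (∀ j, n' j ≤ n j) ∧ n' i = n i := by
      intro n'
      simp only [Finset.mem_sdiff, Fintype.mem_piFinset, Finset.mem_Iic]
      constructor
      · rintro ⟨h1, h2⟩
        refine ⟨h1, ?_⟩
        by_contra hne
        refine h2 (fun j => ?_)
        by_cases hj : j = i
        · subst hj; rw [hmi]
          have := h1 j; omega
        · rw [hmj j hj]; exact h1 j
      · rintro ⟨h1, h2⟩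
        refine ⟨h1, fun h' => ?_⟩
        have := h' i
        rw [hmi] at this
        omega
    have hnmem : n ∈ (Fintype.piFinset (fun j => Finset.Iic (n j)) \
        Fintype.piFinset (fun j => Finset.Iic (m j))) := by
      rw [hmemsd]; exact ⟨fun j => le_rfl, rfl⟩
    rw [← Finset.add_sum_erase _ μ hnmem] at hsd
    have hrest : ∑ n' ∈ (Fintype.piFinset (fun j => Finset.Iic (n j)) \
        Fintype.piFinset (fun j => Finset.Iic (m j))).erase n, μ n' = 0 := by
      apply Finset.sum_eq_zero
      intro n' hn'
      have hne : n' ≠ n := Finset.ne_of_mem_erase hn'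
      have hmem := Finset.mem_of_mem_erase hn'
      rw [hmemsd] at hmem
      obtain ⟨hle, hii⟩ := hmem
      have hlt : ∑ j, n' j < N := by
        rw [← hN]
        apply Finset.sum_lt_sum (fun j _ => hle j)
        obtain ⟨j, hj⟩ : ∃ j, n' j ≠ n j := by
          by_contra h
          push_neg at h
          exact hne (funext h)
        exact ⟨j, Finset.mem_univ j, lt_of_le_of_ne (hle j) hj⟩
      exact IH _ hlt n' rfl i (hii ▸ hi)
    rw [hrest, add_zero] at hsd
    exact hsd
end
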